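/- arXiv:2505.20731 — 5 statements merged into one kernel-verified Lean document; each statement's English description precedes it below -/
import Mathlib

section
/- Let (Ω, μ) be a probability space, Y : Ω → {0,1} a measurable random variable, and X : Ω → 𝒳, ξ : Ω → Ξ, U : Ω → 𝒰 measurable maps into standard Borel spaces. Let 𝒢 = σ(ξ) ⊔ σ(U) and ℱ = σ(X) ⊔ σ(U), and let p_𝒢 = μ[Y | 𝒢] and p_ℱ = μ[Y | ℱ] be versions of the conditional expectations taking values in the open interval (0,1) almost surely. Assume X and Y are conditionally independent given 𝒢, and that the random variables Y·log p_𝒢, (1−Y)·log(1−p_𝒢), Y·log p_ℱ, (1−Y)·log(1−p_ℱ) are integrable. Then E[−Y log p_𝒢 − (1−Y) log(1−p_𝒢)] ≤ E[−Y log p_ℱ − (1−Y) log(1−p_ℱ)]; that is, the expected cross-entropy of Y against its conditional probability given (ξ, U) is no larger than the expected cross-entropy of Y against its conditional probability given (X, U). -/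
open MeasureTheory ProbabilityTheory Real Set Filter

/-!
Conditional independence of `X` and `Y` given `𝒢` upgrades, by a π-λ argument on the sets
`t ∩ X⁻¹' A`, to `μ[Y | 𝒢 ⊔ σ(X)] = μ[Y | 𝒢]`. Since `σ(U) ≤ 𝒢`, also `ℱ ≤ 𝒢 ⊔ σ(X)`, so `p_𝒢`
is the conditional probability of `Y` given a σ-algebra for which `p_ℱ` is measurable.
Conditioning on that σ-algebra turns the difference of the two expected cross-entropies into the
expectation of the binary Kullback–Leibler divergence of `p_𝒢` from `p_ℱ`, which is nonnegative
by Gibbs' inequality.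
-/

noncomputable def binaryCrossEntropy (y p : ℝ) : ℝ :=
  -y * log p - (1 - y) * log (1 - p)

noncomputable def binaryKLDiv (q p : ℝ) : ℝ :=
  q * (log q - log p) + (1 - q) * (log (1 - q) - log (1 - p))

lemma sub_le_mul_log_sub_log {p q : ℝ} (hp : 0 < p) (hq : 0 < q) :
    q - p ≤ q * (log q - log p) := by
  have h := one_sub_inv_le_log_of_pos (div_pos hq hp)
  rw [inv_div, log_div hq.ne' hp.ne'] at h
  have h' := mul_le_mul_of_nonneg_left h hq.le
  rwa [mul_sub, mul_one, mul_div_cancel₀ p hq.ne'] at h'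

lemma binaryCrossEntropy_sub_binaryCrossEntropy (y p q : ℝ) :
    binaryCrossEntropy y p - binaryCrossEntropy y q =
      y * (log q - log p) + (1 - y) * (log (1 - q) - log (1 - p)) := by
  unfold binaryCrossEntropy
  ring

lemma binaryKLDiv_nonneg {q p : ℝ} (hq : q ∈ Ioo (0 : ℝ) 1) (hp : p ∈ Ioo (0 : ℝ) 1) :
    0 ≤ binaryKLDiv q p := by
  have h₁ := sub_le_mul_log_sub_log hp.1 hq.1
  have h₂ := sub_le_mul_log_sub_log (sub_pos.2 hp.2) (sub_pos.2 hq.2)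
  unfold binaryKLDiv
  linarith

lemma indicator_preimage_one_eq_self {Ω M : Type*} [Zero M] [One M] [NeZero (1 : M)]
    {Y : Ω → M} (hY : ∀ ω, Y ω = 0 ∨ Y ω = 1) :
    (Y ⁻¹' {1}).indicator (fun _ => (1 : M)) = Y := by
  funext ω
  rcases hY ω with h | h <;> simp [h]

lemma indicator_one_mul_eq_indicator {Ω M : Type*} [MulZeroOneClass M] (s : Set Ω) (g : Ω → M) :
    s.indicator (fun _ => (1 : M)) * g = s.indicator g := by
  funext ω
  by_cases h : ω ∈ s <;> simp [h]

lemma Measurable.comp_aestronglyMeasurable_real {Ω : Type*} {m m₀ : MeasurableSpace Ω}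
    {μ : Measure[m₀] Ω} {g : ℝ → ℝ} {f : Ω → ℝ} (hg : Measurable g)
    (hf : AEStronglyMeasurable[m] f μ) : AEStronglyMeasurable[m] (fun ω => g (f ω)) μ :=
  ⟨fun ω => g (hf.mk f ω), (hg.comp hf.stronglyMeasurable_mk.measurable).stronglyMeasurable,
    hf.ae_eq_mk.fun_comp g⟩

namespace MeasurableSpace

variable {Ω : Type*}

lemma sup_eq_generateFrom_image2_inter (m₁ m₂ : MeasurableSpace Ω) :
    m₁ ⊔ m₂ = generateFrom (image2 (· ∩ ·) {s | MeasurableSet[m₁] s} {t | MeasurableSet[m₂] t}) :=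
  le_antisymm
    (sup_le (fun s hs => measurableSet_generateFrom ⟨s, hs, univ, .univ, inter_univ s⟩)
      (fun t ht => measurableSet_generateFrom ⟨univ, .univ, t, ht, univ_inter t⟩))
    (generateFrom_le <| by
      rintro _ ⟨s, hs, t, ht, rfl⟩
      exact ((le_sup_left : m₁ ≤ m₁ ⊔ m₂) s hs).inter ((le_sup_right : m₂ ≤ m₁ ⊔ m₂) t ht))

lemma isPiSystem_image2_inter (m₁ m₂ : MeasurableSpace Ω) :
    IsPiSystem (image2 (· ∩ ·) {s | MeasurableSet[m₁] s} {t | MeasurableSet[m₂] t}) := by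
  rintro _ ⟨s₁, hs₁, t₁, ht₁, rfl⟩ _ ⟨s₂, hs₂, t₂, ht₂, rfl⟩ -
  exact ⟨s₁ ∩ s₂, hs₁.inter hs₂, t₁ ∩ t₂, ht₁.inter ht₂, inter_inter_inter_comm s₁ s₂ t₁ t₂⟩

end MeasurableSpace

namespace MeasureTheory

variable {Ω : Type*} {m m₀ : MeasurableSpace Ω} {μ : Measure[m₀] Ω}

lemma setIntegral_eq_of_isPiSystem {E : Type*} [NormedAddCommGroup E] [NormedSpace ℝ E]
    (hm : m ≤ m₀) {C : Set (Set Ω)} (hC : m = MeasurableSpace.generateFrom C) (hCpi : IsPiSystem C)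
    {f g : Ω → E} (hf : Integrable f μ) (hg : Integrable g μ)
    (hbasic : ∀ s ∈ C, ∫ ω in s, f ω ∂μ = ∫ ω in s, g ω ∂μ)
    (huniv : ∫ ω, f ω ∂μ = ∫ ω, g ω ∂μ) {s : Set Ω} (hs : MeasurableSet[m] s) :
    ∫ ω in s, f ω ∂μ = ∫ ω in s, g ω ∂μ := by
  induction s, hs using MeasurableSpace.induction_on_inter hC hCpi with
  | empty => simp
  | basic t ht => exact hbasic t ht
  | compl t ht iht =>
    rw [setIntegral_compl (hm t ht) hf, setIntegral_compl (hm t ht) hg, iht, huniv]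
  | iUnion t htd ht iht =>
    rw [integral_iUnion (fun i => hm _ (ht i)) htd hf.integrableOn,
      integral_iUnion (fun i => hm _ (ht i)) htd hg.integrableOn]
    exact tsum_congr iht

lemma integrable_binaryCrossEntropy {Y q : Ω → ℝ}
    (hYq : Integrable (fun ω => Y ω * log (q ω)) μ)
    (hYq' : Integrable (fun ω => (1 - Y ω) * log (1 - q ω)) μ) :
    Integrable (fun ω => binaryCrossEntropy (Y ω) (q ω)) μ :=
  (hYq.neg.sub hYq').congr <| ae_of_all _ fun ω => by
    simp only [Pi.sub_apply, Pi.neg_apply, binaryCrossEntropy, neg_mul]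

variable [IsFiniteMeasure μ]

lemma setIntegral_inter_condExp_of_condExp_indicator_mul (hm : m ≤ m₀) {Z : Ω → ℝ}
    (hZ : Integrable Z μ) {s t : Set Ω} (ht : MeasurableSet[m] t) (hs : MeasurableSet s)
    (hCI : μ[s.indicator (fun _ => (1 : ℝ)) * Z | m] =ᵐ[μ]
      μ[s.indicator (fun _ => (1 : ℝ)) | m] * μ[Z | m]) :
    ∫ ω in t ∩ s, μ[Z | m] ω ∂μ = ∫ ω in t ∩ s, Z ω ∂μ := by
  have hint : Integrable (s.indicator (fun _ => (1 : ℝ)) * μ[Z | m]) μ := by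
    rw [indicator_one_mul_eq_indicator]
    exact integrable_condExp.indicator hs
  have hpull : μ[s.indicator (fun _ => (1 : ℝ)) * μ[Z | m] | m] =ᵐ[μ]
      μ[s.indicator (fun _ => (1 : ℝ)) | m] * μ[Z | m] :=
    condExp_mul_of_aestronglyMeasurable_right stronglyMeasurable_condExp.aestronglyMeasurable
      hint ((integrable_const 1).indicator hs)
  calc ∫ ω in t ∩ s, μ[Z | m] ω ∂μ
      = ∫ ω in t, (s.indicator (fun _ => (1 : ℝ)) * μ[Z | m]) ω ∂μ := by
        rw [indicator_one_mul_eq_indicator, setIntegral_indicator hs]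
    _ = ∫ ω in t, μ[s.indicator (fun _ => (1 : ℝ)) * μ[Z | m] | m] ω ∂μ :=
        (setIntegral_condExp hm hint ht).symm
    _ = ∫ ω in t, μ[s.indicator (fun _ => (1 : ℝ)) * Z | m] ω ∂μ :=
        setIntegral_congr_ae (hm t ht) ((hpull.trans hCI.symm).mono fun _ h _ => h)
    _ = ∫ ω in t, (s.indicator (fun _ => (1 : ℝ)) * Z) ω ∂μ :=
        setIntegral_condExp hm (by rw [indicator_one_mul_eq_indicator]; exact hZ.indicator hs) ht
    _ = ∫ ω in t ∩ s, Z ω ∂μ := by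
        rw [indicator_one_mul_eq_indicator, setIntegral_indicator hs]

theorem condExp_sup_ae_eq_of_condExp_indicator_mul {m' : MeasurableSpace Ω} (hm : m ≤ m₀)
    (hm' : m' ≤ m₀) {Z : Ω → ℝ} (hZ : Integrable Z μ)
    (hCI : ∀ s, MeasurableSet[m'] s → μ[s.indicator (fun _ => (1 : ℝ)) * Z | m] =ᵐ[μ]
      μ[s.indicator (fun _ => (1 : ℝ)) | m] * μ[Z | m]) :
    μ[Z | m ⊔ m'] =ᵐ[μ] μ[Z | m] := by
  refine (ae_eq_condExp_of_forall_setIntegral_eq (sup_le hm hm') hZ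
    (fun _ _ _ => integrable_condExp.integrableOn) (fun u hu _ => ?_)
    (stronglyMeasurable_condExp.mono le_sup_left).aestronglyMeasurable).symm
  refine setIntegral_eq_of_isPiSystem (sup_le hm hm')
    (MeasurableSpace.sup_eq_generateFrom_image2_inter m m')
    (MeasurableSpace.isPiSystem_image2_inter m m') integrable_condExp hZ ?_
    (integral_condExp hm) hu
  rintro _ ⟨t, ht, s, hs, rfl⟩
  exact setIntegral_inter_condExp_of_condExp_indicator_mul hm hZ ht (hm' s hs) (hCI s hs)

lemma condExp_one_sub (hm : m ≤ m₀) {Y : Ω → ℝ} (hY : Integrable Y μ) :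
    μ[1 - Y | m] =ᵐ[μ] 1 - μ[Y | m] := by
  have h := condExp_sub (integrable_const (1 : ℝ)) hY m
  rwa [condExp_const hm] at h

theorem integral_binaryCrossEntropy_le_of_ae_eq_condExp (hm : m ≤ m₀) {Y q p : Ω → ℝ}
    (hY : Integrable Y μ) (hq : q =ᵐ[μ] μ[Y | m]) (hp : AEStronglyMeasurable[m] p μ)
    (hq01 : ∀ᵐ ω ∂μ, q ω ∈ Ioo (0 : ℝ) 1) (hp01 : ∀ᵐ ω ∂μ, p ω ∈ Ioo (0 : ℝ) 1)
    (hYq : Integrable (fun ω => Y ω * log (q ω)) μ)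
    (hYq' : Integrable (fun ω => (1 - Y ω) * log (1 - q ω)) μ)
    (hYp : Integrable (fun ω => Y ω * log (p ω)) μ)
    (hYp' : Integrable (fun ω => (1 - Y ω) * log (1 - p ω)) μ) :
    ∫ ω, binaryCrossEntropy (Y ω) (q ω) ∂μ ≤ ∫ ω, binaryCrossEntropy (Y ω) (p ω) ∂μ := by
  set f₁ : Ω → ℝ := fun ω => log (q ω) - log (p ω)
  set f₂ : Ω → ℝ := fun ω => log (1 - q ω) - log (1 - p ω)
  have hqm : AEStronglyMeasurable[m] q μ :=
    stronglyMeasurable_condExp.aestronglyMeasurable.congr hq.symm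
  have hf₁ : AEStronglyMeasurable[m] f₁ μ :=
    (measurable_log.comp_aestronglyMeasurable_real hqm).sub
      (measurable_log.comp_aestronglyMeasurable_real hp)
  have hf₂ : AEStronglyMeasurable[m] f₂ μ :=
    (measurable_log.comp_aestronglyMeasurable_real (aestronglyMeasurable_const.sub hqm)).sub
      (measurable_log.comp_aestronglyMeasurable_real (aestronglyMeasurable_const.sub hp))
  have hYf₁ : Integrable (Y * f₁) μ :=
    (hYq.sub hYp).congr (ae_of_all _ fun ω => (mul_sub _ _ _).symm)
  have hYf₂ : Integrable ((1 - Y) * f₂) μ :=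
    (hYq'.sub hYp').congr (ae_of_all _ fun ω => (mul_sub _ _ _).symm)
  have h₁ : μ[Y * f₁ | m] =ᵐ[μ] q * f₁ :=
    (condExp_mul_of_aestronglyMeasurable_right hf₁ hYf₁ hY).trans (hq.symm.mul .rfl)
  have h₂ : μ[(1 - Y) * f₂ | m] =ᵐ[μ] (1 - q) * f₂ :=
    (condExp_mul_of_aestronglyMeasurable_right hf₂ hYf₂ ((integrable_const 1).sub hY)).trans
      (((condExp_one_sub hm hY).trans (EventuallyEq.rfl.sub hq.symm)).mul .rfl)
  have hgap : ∫ ω, binaryCrossEntropy (Y ω) (p ω) ∂μ - ∫ ω, binaryCrossEntropy (Y ω) (q ω) ∂μ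
      = ∫ ω, (μ[Y * f₁ | m] ω + μ[(1 - Y) * f₂ | m] ω) ∂μ := by
    rw [integral_add integrable_condExp integrable_condExp, integral_condExp hm,
      integral_condExp hm, ← integral_add hYf₁ hYf₂, ← integral_sub
        (integrable_binaryCrossEntropy hYp hYp') (integrable_binaryCrossEntropy hYq hYq')]
    exact integral_congr_ae <| ae_of_all _ fun ω =>
      binaryCrossEntropy_sub_binaryCrossEntropy (Y ω) (p ω) (q ω)
  have hkl : 0 ≤ ∫ ω, (μ[Y * f₁ | m] ω + μ[(1 - Y) * f₂ | m] ω) ∂μ := by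
    refine integral_nonneg_of_ae ?_
    filter_upwards [h₁, h₂, hq01, hp01] with ω e₁ e₂ hqω hpω
    rw [e₁, e₂]
    exact binaryKLDiv_nonneg hqω hpω
  linarith

end MeasureTheory

/-- Proposition 1 of the paper: under conditional independence of `X` and `Y` given the
σ-algebra generated by the latent embedding `ξ` and covariates `U`, the expected binary
cross-entropy of `Y` against its conditional probability given `(ξ, U)` is no larger than
against its conditional probability given `(X, U)`. -/
theorem cross_entropy_latent_le_observed
    {Ω 𝒳 Ξ 𝒰 : Type*} [MeasurableSpace Ω]
    [MeasurableSpace 𝒳] [StandardBorelSpace 𝒳]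
    [MeasurableSpace Ξ] [StandardBorelSpace Ξ]
    [MeasurableSpace 𝒰] [StandardBorelSpace 𝒰]
    (μ : Measure Ω) [IsProbabilityMeasure μ]
    (Y : Ω → ℝ) (hY : Measurable Y) (hY01 : ∀ ω, Y ω = 0 ∨ Y ω = 1)
    (X : Ω → 𝒳) (hX : Measurable X)
    (ξ : Ω → Ξ) (hξ : Measurable ξ)
    (U : Ω → 𝒰) (hU : Measurable U)
    (G F : MeasurableSpace Ω)
    (hG : G = MeasurableSpace.comap ξ inferInstance ⊔ MeasurableSpace.comap U inferInstance)
    (hF : F = MeasurableSpace.comap X inferInstance ⊔ MeasurableSpace.comap U inferInstance)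
    (pG pF : Ω → ℝ)
    (hpG : pG =ᵐ[μ] μ[Y | G]) (hpF : pF =ᵐ[μ] μ[Y | F])
    (hpG01 : ∀ᵐ ω ∂μ, pG ω ∈ Set.Ioo (0:ℝ) 1)
    (hpF01 : ∀ᵐ ω ∂μ, pF ω ∈ Set.Ioo (0:ℝ) 1)
    -- conditional independence of X and Y given G
    (hCI : ∀ (A : Set 𝒳) (B : Set ℝ), MeasurableSet A → MeasurableSet B →
      (μ[fun ω => (X ⁻¹' A).indicator (fun _ => (1:ℝ)) ω *
          (Y ⁻¹' B).indicator (fun _ => (1:ℝ)) ω | G])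
        =ᵐ[μ]
      fun ω => (μ[(X ⁻¹' A).indicator (fun _ => (1:ℝ)) | G]) ω *
        (μ[(Y ⁻¹' B).indicator (fun _ => (1:ℝ)) | G]) ω)
    (hint1 : Integrable (fun ω => Y ω * Real.log (pG ω)) μ)
    (hint2 : Integrable (fun ω => (1 - Y ω) * Real.log (1 - pG ω)) μ)
    (hint3 : Integrable (fun ω => Y ω * Real.log (pF ω)) μ)
    (hint4 : Integrable (fun ω => (1 - Y ω) * Real.log (1 - pF ω)) μ) :
    ∫ ω, (-(Y ω) * Real.log (pG ω) - (1 - Y ω) * Real.log (1 - pG ω)) ∂μ ≤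
      ∫ ω, (-(Y ω) * Real.log (pF ω) - (1 - Y ω) * Real.log (1 - pF ω)) ∂μ := by
  -- `G` and `F` are local instances, so the ambient σ-algebra is reached through `hξ`, not `‹_›`.
  have hG_le := sup_le hξ.comap_le hU.comap_le
  rw [← hG] at hG_le
  have hH_le := sup_le hG_le hX.comap_le
  have hF_le_H : F ≤ G ⊔ MeasurableSpace.comap X inferInstance := by
    rw [hF, hG]
    exact sup_le le_sup_right (le_sup_right.trans le_sup_left)
  have hYint : Integrable Y μ := .of_bound hY.aestronglyMeasurable 1 <| ae_of_all _ fun ω => by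
    rcases hY01 ω with h | h <;> simp [h]
  have hpGH : pG =ᵐ[μ] μ[Y | G ⊔ MeasurableSpace.comap X inferInstance] := by
    refine hpG.trans (condExp_sup_ae_eq_of_condExp_indicator_mul hG_le hX.comap_le hYint ?_).symm
    rintro _ ⟨A, hA, rfl⟩
    have h := hCI A {1} hA (measurableSet_singleton 1)
    rw [indicator_preimage_one_eq_self hY01] at h
    exact h
  have hpFH : AEStronglyMeasurable[G ⊔ MeasurableSpace.comap X inferInstance] pF μ :=
    (stronglyMeasurable_condExp.mono hF_le_H).aestronglyMeasurable.congr hpF.symm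
  exact integral_binaryCrossEntropy_le_of_ae_eq_condExp hH_le hYint hpGH hpFH hpG01 hpF01
    hint1 hint2 hint3 hint4
end

section
/- Fix p, q ∈ ℕ, counts x ∈ ℕ^p, vectors v_1, …, v_p ∈ ℝ^q, a shift a ∈ ℝ^q, and vectors m ∈ ℝ^q, s ∈ ℝ^q with s_i > 0 for all i. Let φ be the product probability measure on ℝ^q whose i-th coordinate is the real Gaussian with mean m_i and variance s_i. Then ∫ Σ_{j=1}^p [ x_j ⟨v_j, a + w⟩ − exp(⟨v_j, a + w⟩) − log(x_j!) ] dφ(w) = Σ_{j=1}^p x_j ⟨v_j, a + m⟩ − Σ_{j=1}^p exp( ⟨v_j, a + m⟩ + (1/2) Σ_{i=1}^q v_{ji}² s_i ) − Σ_{j=1}^p log(x_j!); that is, the expected Poisson log-likelihood of the counts x under the log-intensities ⟨v_j, a + W⟩ with W ∼ N(m, diag(s)) has this closed form. -/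
open MeasureTheory ProbabilityTheory

/-- The product Gaussian measure on `ℝ^q` with coordinate means `m i` and variances `s i`. -/
noncomputable def gaussPi (q : ℕ) (m s : Fin q → ℝ) : Measure (Fin q → ℝ) :=
  Measure.pi fun i => gaussianReal (m i) (s i).toNNReal

/-!
The integrand is affine in the log-intensities `η_j = ⟨v_j, a + W⟩` apart from the terms
`exp η_j`, so by linearity everything reduces to `E[η_j] = ⟨v_j, a + m⟩` and to the
moment-generating function of `η_j`. Since the coordinates of `W` are independent,
`E[exp η_j]` factors into one-dimensional Gaussian moment-generating functions
`E[exp (c (a + X))] = exp (c (a + μ) + v c² / 2)` for `X ∼ N(μ, v)`.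
-/

open Real
open scoped NNReal

section Pi

variable {ι : Type*} [Fintype ι] {E : ι → Type*} [∀ i, MeasurableSpace (E i)]
  {μ : (i : ι) → Measure (E i)} [∀ i, SigmaFinite (μ i)]

lemma integral_exp_sum_pi (f : (i : ι) → E i → ℝ) :
    ∫ w, rexp (∑ i, f i (w i)) ∂Measure.pi μ = ∏ i, ∫ x, rexp (f i x) ∂μ i := by
  simp_rw [exp_sum]
  exact integral_fintype_prod_eq_prod fun i x => rexp (f i x)

lemma integrable_exp_sum_pi {f : (i : ι) → E i → ℝ}
    (hf : ∀ i, Integrable (fun x => rexp (f i x)) (μ i)) :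
    Integrable (fun w => rexp (∑ i, f i (w i))) (Measure.pi μ) := by
  simp_rw [exp_sum]
  exact Integrable.fintype_prod_dep hf

end Pi

section GaussianReal

variable (μ : ℝ) (v : ℝ≥0) (c a : ℝ)

lemma integral_exp_mul_const_add_gaussianReal :
    ∫ x, rexp (c * (a + x)) ∂gaussianReal μ v = rexp (c * (a + μ) + v * c ^ 2 / 2) := by
  have hmgf : ∫ x, rexp (c * x) ∂gaussianReal μ v = rexp (μ * c + v * c ^ 2 / 2) :=
    congrFun mgf_fun_id_gaussianReal c
  have hsplit : ∀ x, rexp (c * (a + x)) = rexp (c * a) * rexp (c * x) := fun x => by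
    rw [mul_add, exp_add]
  simp_rw [hsplit]
  rw [integral_const_mul, hmgf, ← exp_add]
  ring_nf

lemma integrable_exp_mul_const_add_gaussianReal :
    Integrable (fun x => rexp (c * (a + x))) (gaussianReal μ v) := by
  simp_rw [mul_add, exp_add]
  exact (integrable_exp_mul_gaussianReal c).const_mul _

lemma integrable_mul_const_add_gaussianReal :
    Integrable (fun x => c * (a + x)) (gaussianReal μ v) :=
  ((integrable_const a).add IsGaussian.integrable_fun_id).const_mul c

lemma integral_mul_const_add_gaussianReal :
    ∫ x, c * (a + x) ∂gaussianReal μ v = c * (a + μ) := by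
  rw [integral_const_mul, integral_add (integrable_const a) IsGaussian.integrable_fun_id,
    integral_id_gaussianReal, integral_const, probReal_univ, one_smul]

end GaussianReal

section GaussPi

variable {q : ℕ} (m s c a : Fin q → ℝ)

instance (q : ℕ) (m s : Fin q → ℝ) : IsProbabilityMeasure (gaussPi q m s) := by
  unfold gaussPi; infer_instance

lemma integral_exp_affine_gaussPi (hs : ∀ i, 0 ≤ s i) :
    ∫ w, rexp (∑ i, c i * (a i + w i)) ∂gaussPi q m s
      = rexp ((∑ i, c i * (a i + m i)) + (1 / 2) * ∑ i, c i ^ 2 * s i) := by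
  rw [gaussPi, integral_exp_sum_pi (fun i x => c i * (a i + x)), Finset.mul_sum,
    ← Finset.sum_add_distrib, exp_sum]
  refine Finset.prod_congr rfl fun i _ => ?_
  rw [integral_exp_mul_const_add_gaussianReal, Real.coe_toNNReal _ (hs i)]
  ring_nf

lemma integrable_exp_affine_gaussPi :
    Integrable (fun w => rexp (∑ i, c i * (a i + w i))) (gaussPi q m s) :=
  integrable_exp_sum_pi fun i => integrable_exp_mul_const_add_gaussianReal _ _ (c i) (a i)

lemma integrable_mul_const_add_eval_gaussPi (i : Fin q) :
    Integrable (fun w => c i * (a i + w i)) (gaussPi q m s) :=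
  integrable_comp_eval (X := fun _ => ℝ) (i := i) (f := fun x => c i * (a i + x))
    (integrable_mul_const_add_gaussianReal _ _ (c i) (a i))

lemma integrable_affine_gaussPi :
    Integrable (fun w => ∑ i, c i * (a i + w i)) (gaussPi q m s) :=
  integrable_finsetSum _ fun i _ => integrable_mul_const_add_eval_gaussPi m s c a i

lemma integral_affine_gaussPi :
    ∫ w, ∑ i, c i * (a i + w i) ∂gaussPi q m s = ∑ i, c i * (a i + m i) := by
  rw [integral_finsetSum _ fun i _ => integrable_mul_const_add_eval_gaussPi m s c a i]
  refine Finset.sum_congr rfl fun i _ => ?_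
  rw [gaussPi, integral_comp_eval (X := fun _ => ℝ) (i := i) (f := fun x => c i * (a i + x))
    (by fun_prop), integral_mul_const_add_gaussianReal]

lemma integrable_poissonLogLik_gaussPi (k : ℕ) :
    Integrable (fun w => (k : ℝ) * (∑ i, c i * (a i + w i)) - rexp (∑ i, c i * (a i + w i))
      - log k.factorial) (gaussPi q m s) :=
  (((integrable_affine_gaussPi m s c a).const_mul _).sub'
    (integrable_exp_affine_gaussPi m s c a)).sub' (integrable_const _)

lemma integral_poissonLogLik_gaussPi (hs : ∀ i, 0 ≤ s i) (k : ℕ) :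
    ∫ w, ((k : ℝ) * (∑ i, c i * (a i + w i)) - rexp (∑ i, c i * (a i + w i))
      - log k.factorial) ∂gaussPi q m s
      = k * (∑ i, c i * (a i + m i))
        - rexp ((∑ i, c i * (a i + m i)) + (1 / 2) * ∑ i, c i ^ 2 * s i) - log k.factorial := by
  have hlin := (integrable_affine_gaussPi m s c a).const_mul (k : ℝ)
  have hexp := integrable_exp_affine_gaussPi m s c a
  rw [integral_sub (hlin.sub' hexp) (integrable_const _), integral_sub hlin hexp,
    integral_const_mul, integral_affine_gaussPi, integral_exp_affine_gaussPi m s c a hs,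
    integral_const, probReal_univ, one_smul]

end GaussPi

/-- Closed form for the expected Poisson log-likelihood of counts `x` under log-intensities
`⟨v_j, a + W⟩` with `W ∼ N(m, diag s)`:
`E[Σ_j (x_j ⟨v_j, a+W⟩ − exp⟨v_j, a+W⟩ − log x_j!)]
  = Σ_j x_j ⟨v_j, a+m⟩ − Σ_j exp(⟨v_j, a+m⟩ + (1/2) Σ_i v_{ji}² s_i) − Σ_j log x_j!`. -/
theorem expected_poisson_loglik_gva
    (p q : ℕ) (x : Fin p → ℕ) (v : Fin p → Fin q → ℝ) (a : Fin q → ℝ)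
    (m : Fin q → ℝ) (s : Fin q → ℝ) (hs : ∀ i, 0 < s i) :
    ∫ w, (∑ j, ((x j : ℝ) * (∑ i, v j i * (a i + w i))
        - Real.exp (∑ i, v j i * (a i + w i))
        - Real.log (Nat.factorial (x j)))) ∂(gaussPi q m s) =
      (∑ j, (x j : ℝ) * (∑ i, v j i * (a i + m i)))
        - (∑ j, Real.exp ((∑ i, v j i * (a i + m i)) + (1 / 2) * ∑ i, (v j i) ^ 2 * s i))
        - ∑ j, Real.log (Nat.factorial (x j)) := by
  rw [integral_finsetSum _ fun j _ => integrable_poissonLogLik_gaussPi m s (v j) a (x j),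
    Finset.sum_congr rfl fun j _ =>
      integral_poissonLogLik_gaussPi m s (v j) a (fun i => (hs i).le) (x j),
    Finset.sum_sub_distrib, Finset.sum_sub_distrib]
end

section
/- Fix p, q ∈ ℕ, counts x ∈ ℕ^p, vectors v_1, …, v_p ∈ ℝ^q, a shift a ∈ ℝ^q, a symmetric positive definite Λ ∈ ℝ^{q×q}, a constant c ∈ ℝ, and vectors m ∈ ℝ^q, s ∈ ℝ^q with s_i > 0. Let φ be the product Gaussian measure on ℝ^q with coordinate means m_i and variances s_i, with Lebesgue density g(w) = Π_i (2π s_i)^{-1/2} exp(−(w_i−m_i)²/(2s_i)), and let h_Λ(w) = (2π)^{-q/2} det(Λ)^{-1/2} exp(−(1/2)wᵀΛ^{-1}w). Then the ELBO J := ∫ [ Σ_{j=1}^p ( x_j ⟨v_j, a+w⟩ − exp(⟨v_j, a+w⟩) − log(x_j!) ) + log h_Λ(w) + c ] dφ(w) − ∫ log g(w) dφ(w) equals Σ_{j=1}^p x_j ⟨v_j, a+m⟩ − Σ_{j=1}^p A_j − Σ_{j=1}^p log(x_j!) − (1/2) log det(Λ) − (1/2) mᵀΛ^{-1}m − (1/2)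 Σ_{i=1}^q (Λ^{-1})_{ii} s_i + (1/2) Σ_{i=1}^q log s_i + q/2 + c, where A_j = exp( ⟨v_j, a+m⟩ + (1/2) Σ_{i=1}^q v_{ji}² s_i ). -/
/-!
Under `N(m, diag s)` the coordinates are independent with means `m i` and variances `s i`, so
after taking logarithms of the two densities every term of the ELBO is an elementary Gaussian
moment: `E ⟨t, W⟩ = ⟨t, m⟩`; `E exp ⟨t, W⟩` is the product of the one-dimensional moment
generating functions, `exp (⟨t, m⟩ + ½ Σ tᵢ² sᵢ)`; `E Wᵀ A W = mᵀ A m + Σ Aᵢᵢ sᵢ`, since distinct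
coordinates are uncorrelated; and `E (Wᵢ - mᵢ)² = sᵢ`.
-/

open MeasureTheory ProbabilityTheory Real Matrix

lemma dotProduct_mulVec_self_eq_sum {ι R : Type*} [Fintype ι] [CommSemiring R]
    (A : Matrix ι ι R) (x : ι → R) :
    x ⬝ᵥ A *ᵥ x = ∑ i, ∑ k, A i k * (x i * x k) := by
  simp only [dotProduct, mulVec, Finset.mul_sum]
  exact Finset.sum_congr rfl fun i _ => Finset.sum_congr rfl fun k _ => by ring

section ProductMeasure

variable {ι : Type*} [Fintype ι] {μ : ι → Measure ℝ} [∀ i, IsProbabilityMeasure (μ i)]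

lemma integrable_dotProduct_pi (h : ∀ i, Integrable id (μ i)) (t : ι → ℝ) :
    Integrable (fun x => t ⬝ᵥ x) (Measure.pi μ) :=
  integrable_finsetSum _ fun i _ => (integrable_eval (h i)).const_mul (t i)

lemma integral_dotProduct_pi (h : ∀ i, Integrable id (μ i)) (t : ι → ℝ) :
    ∫ x, t ⬝ᵥ x ∂Measure.pi μ = t ⬝ᵥ fun i => ∫ y, y ∂μ i := by
  simp only [dotProduct]
  rw [integral_finsetSum _ fun i _ => (integrable_eval (h i)).const_mul (t i)]
  simp only [integral_const_mul, integral_eval]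

lemma integrable_exp_dotProduct_pi {t : ι → ℝ}
    (h : ∀ i, Integrable (fun y => exp (t i * y)) (μ i)) :
    Integrable (fun x => exp (t ⬝ᵥ x)) (Measure.pi μ) := by
  simpa only [dotProduct, exp_sum] using Integrable.fintype_prod h

lemma integral_exp_dotProduct_pi (t : ι → ℝ) :
    ∫ x, exp (t ⬝ᵥ x) ∂Measure.pi μ = ∏ i, mgf id (μ i) (t i) := by
  simp only [dotProduct, exp_sum, mgf, id]
  exact integral_fintype_prod_eq_prod (fun i y => exp (t i * y))

lemma memLp_eval_pi {i : ι} (h : MemLp id 2 (μ i)) :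
    MemLp (fun x : ι → ℝ => x i) 2 (Measure.pi μ) :=
  h.comp_measurePreserving (measurePreserving_eval μ i)

lemma integrable_mul_eval_pi (h : ∀ i, MemLp id 2 (μ i)) (i k : ι) :
    Integrable (fun x : ι → ℝ => x i * x k) (Measure.pi μ) :=
  (memLp_eval_pi (h i)).integrable_mul (memLp_eval_pi (h k))

lemma integral_mul_eval_pi [DecidableEq ι] (h : ∀ i, MemLp id 2 (μ i)) (i k : ι) :
    ∫ x, x i * x k ∂Measure.pi μ =
      (∫ y, y ∂μ i) * (∫ y, y ∂μ k) + if i = k then Var[id; μ i] else 0 := by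
  split_ifs with hik
  · subst hik
    rw [variance_eq_sub (h i), integral_comp_eval (f := fun y => y * y) (by fun_prop)]
    simp [sq]
  · have hind := (iIndepFun_pi (X := fun _ => id) (μ := μ) fun _ => aemeasurable_id).indepFun hik
    rw [add_zero, ← integral_eval, ← integral_eval]
    exact hind.integral_mul_eq_mul_integral (measurable_pi_apply i).aestronglyMeasurable
      (measurable_pi_apply k).aestronglyMeasurable

lemma integrable_dotProduct_mulVec_pi (h : ∀ i, MemLp id 2 (μ i)) (A : Matrix ι ι ℝ) :
    Integrable (fun x => x ⬝ᵥ A *ᵥ x) (Measure.pi μ) := by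
  simp only [dotProduct_mulVec_self_eq_sum]
  exact integrable_finsetSum _ fun i _ => integrable_finsetSum _ fun k _ =>
    (integrable_mul_eval_pi h i k).const_mul _

lemma integral_dotProduct_mulVec_pi [DecidableEq ι] (h : ∀ i, MemLp id 2 (μ i))
    (A : Matrix ι ι ℝ) :
    ∫ x, x ⬝ᵥ A *ᵥ x ∂Measure.pi μ =
      (fun i => ∫ y, y ∂μ i) ⬝ᵥ A *ᵥ (fun i => ∫ y, y ∂μ i) + ∑ i, A i i * Var[id; μ i] := by
  simp only [dotProduct_mulVec_self_eq_sum]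
  rw [integral_finsetSum _ fun i _ => integrable_finsetSum _ fun k _ =>
    (integrable_mul_eval_pi h i k).const_mul (A i k)]
  simp only [integral_finsetSum _ fun k _ => (integrable_mul_eval_pi h _ k).const_mul _,
    integral_const_mul, integral_mul_eval_pi h, mul_add, mul_ite, mul_zero,
    Finset.sum_add_distrib, Finset.sum_ite_eq, Finset.mem_univ, if_true]

end ProductMeasure

instance isProbabilityMeasure_gaussPi (q : ℕ) (m s : Fin q → ℝ) :
    IsProbabilityMeasure (gaussPi q m s) := by
  unfold gaussPi
  infer_instance

section GaussPi

variable {q : ℕ} {m s : Fin q → ℝ}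

lemma integrable_dotProduct_gaussPi (t : Fin q → ℝ) :
    Integrable (fun w => t ⬝ᵥ w) (gaussPi q m s) :=
  integrable_dotProduct_pi (fun _ => (memLp_id_gaussianReal 1).integrable le_rfl) t

lemma integral_dotProduct_gaussPi (t : Fin q → ℝ) :
    ∫ w, t ⬝ᵥ w ∂gaussPi q m s = t ⬝ᵥ m := by
  rw [gaussPi, integral_dotProduct_pi (fun _ => (memLp_id_gaussianReal 1).integrable le_rfl)]
  simp only [integral_id_gaussianReal]

lemma integrable_exp_dotProduct_gaussPi (t : Fin q → ℝ) :
    Integrable (fun w => exp (t ⬝ᵥ w)) (gaussPi q m s) :=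
  integrable_exp_dotProduct_pi fun i => integrable_exp_mul_gaussianReal (t i)

lemma integral_exp_dotProduct_gaussPi (hs : ∀ i, 0 ≤ s i) (t : Fin q → ℝ) :
    ∫ w, exp (t ⬝ᵥ w) ∂gaussPi q m s = exp (t ⬝ᵥ m + 1 / 2 * ∑ i, t i ^ 2 * s i) := by
  rw [gaussPi, integral_exp_dotProduct_pi, dotProduct, Finset.mul_sum, ← Finset.sum_add_distrib,
    exp_sum]
  refine Finset.prod_congr rfl fun i _ => ?_
  rw [mgf_id_gaussianReal, Real.coe_toNNReal _ (hs i)]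
  ring_nf

lemma integrable_dotProduct_mulVec_gaussPi (A : Matrix (Fin q) (Fin q) ℝ) :
    Integrable (fun w => w ⬝ᵥ A *ᵥ w) (gaussPi q m s) :=
  integrable_dotProduct_mulVec_pi (fun _ => memLp_id_gaussianReal 2) A

lemma integral_dotProduct_mulVec_gaussPi (hs : ∀ i, 0 ≤ s i) (A : Matrix (Fin q) (Fin q) ℝ) :
    ∫ w, w ⬝ᵥ A *ᵥ w ∂gaussPi q m s = m ⬝ᵥ A *ᵥ m + ∑ i, A i i * s i := by
  rw [gaussPi, integral_dotProduct_mulVec_pi (fun _ => memLp_id_gaussianReal 2)]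
  simp only [integral_id_gaussianReal, variance_id_gaussianReal, Real.coe_toNNReal _ (hs _)]

lemma integrable_sq_sub_gaussPi (i : Fin q) :
    Integrable (fun w => (w i - m i) ^ 2) (gaussPi q m s) :=
  integrable_comp_eval (μ := fun i => gaussianReal (m i) (s i).toNNReal) (i := i)
    (f := fun y => (y - m i) ^ 2) ((memLp_id_gaussianReal 2).sub (memLp_const (m i))).integrable_sq

lemma integral_sq_sub_gaussPi (hs : ∀ i, 0 ≤ s i) (i : Fin q) :
    ∫ w, (w i - m i) ^ 2 ∂gaussPi q m s = s i := by
  rw [gaussPi, integral_comp_eval (μ := fun i => gaussianReal (m i) (s i).toNNReal) (i := i)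
    (f := fun y => (y - m i) ^ 2) (by fun_prop)]
  have hvar := variance_eq_integral (μ := gaussianReal (m i) (s i).toNNReal) aemeasurable_id
  simp only [variance_id_gaussianReal, id, integral_id_gaussianReal,
    Real.coe_toNNReal _ (hs i)] at hvar
  exact hvar.symm

lemma integrable_poisson_logLikelihood_gaussPi (k : ℕ) (b : ℝ) (t : Fin q → ℝ) :
    Integrable (fun w => k * (b + t ⬝ᵥ w) - exp (b + t ⬝ᵥ w) - Real.log (Nat.factorial k))
      (gaussPi q m s) := by
  refine (((integrable_const b).add (integrable_dotProduct_gaussPi t)).const_mul _).sub ?_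
    |>.sub (integrable_const _)
  simpa only [exp_add] using (integrable_exp_dotProduct_gaussPi t).const_mul (exp b)

lemma integral_poisson_logLikelihood_gaussPi (hs : ∀ i, 0 ≤ s i) (k : ℕ) (b : ℝ)
    (t : Fin q → ℝ) :
    ∫ w, (k * (b + t ⬝ᵥ w) - exp (b + t ⬝ᵥ w) - Real.log (Nat.factorial k)) ∂gaussPi q m s =
      k * (b + t ⬝ᵥ m) - exp (b + t ⬝ᵥ m + 1 / 2 * ∑ i, t i ^ 2 * s i)
        - Real.log (Nat.factorial k) := by
  have hlin : Integrable (fun w => (k : ℝ) * (b + t ⬝ᵥ w)) (gaussPi q m s) :=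
    ((integrable_const b).add (integrable_dotProduct_gaussPi t)).const_mul _
  have hexp : Integrable (fun w => exp (b + t ⬝ᵥ w)) (gaussPi q m s) := by
    simpa only [exp_add] using (integrable_exp_dotProduct_gaussPi t).const_mul (exp b)
  have hdiff : Integrable (fun w => k * (b + t ⬝ᵥ w) - exp (b + t ⬝ᵥ w)) (gaussPi q m s) :=
    hlin.sub hexp
  rw [integral_sub hdiff (integrable_const _), integral_sub hlin hexp, integral_const_mul,
    integral_add (integrable_const b) (integrable_dotProduct_gaussPi t)]
  simp only [exp_add, integral_const_mul, integral_exp_dotProduct_gaussPi hs,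
    integral_dotProduct_gaussPi, integral_const, probReal_univ, one_smul, mul_assoc]

lemma log_gaussianDensity {L : Matrix (Fin q) (Fin q) ℝ} (hL : 0 < L.det) (w : Fin q → ℝ) :
    Real.log ((2 * π) ^ (-(q : ℝ) / 2) * L.det ^ (-(1 : ℝ) / 2) *
      Real.exp (-(1 / 2) * (w ⬝ᵥ L⁻¹.mulVec w))) =
      -(q / 2) * Real.log (2 * π) - 1 / 2 * Real.log L.det - 1 / 2 * (w ⬝ᵥ L⁻¹ *ᵥ w) := by
  rw [Real.log_mul (by positivity) (exp_ne_zero _), Real.log_mul (by positivity) (by positivity),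
    Real.log_rpow (by positivity), Real.log_rpow hL, Real.log_exp]
  ring

lemma integrable_log_gaussianDensity_gaussPi {L : Matrix (Fin q) (Fin q) ℝ} (hL : 0 < L.det) :
    Integrable (fun w => Real.log ((2 * π) ^ (-(q : ℝ) / 2) * L.det ^ (-(1 : ℝ) / 2) *
      Real.exp (-(1 / 2) * (w ⬝ᵥ L⁻¹.mulVec w)))) (gaussPi q m s) := by
  simp only [log_gaussianDensity hL]
  exact (integrable_const _).sub ((integrable_dotProduct_mulVec_gaussPi _).const_mul _)

lemma integral_log_gaussianDensity_gaussPi (hs : ∀ i, 0 ≤ s i) {L : Matrix (Fin q) (Fin q) ℝ}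
    (hL : 0 < L.det) :
    ∫ w, Real.log ((2 * π) ^ (-(q : ℝ) / 2) * L.det ^ (-(1 : ℝ) / 2) *
      Real.exp (-(1 / 2) * (w ⬝ᵥ L⁻¹.mulVec w))) ∂gaussPi q m s =
      -(q / 2) * Real.log (2 * π) - 1 / 2 * Real.log L.det
        - 1 / 2 * (m ⬝ᵥ L⁻¹ *ᵥ m + ∑ i, L⁻¹ i i * s i) := by
  simp only [log_gaussianDensity hL]
  rw [integral_sub (integrable_const _) ((integrable_dotProduct_mulVec_gaussPi _).const_mul _),
    integral_const_mul, integral_dotProduct_mulVec_gaussPi hs]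
  simp

lemma log_prod_gaussianPDF (hs : ∀ i, 0 < s i) (w : Fin q → ℝ) :
    Real.log (∏ i, (Real.sqrt (2 * π * s i))⁻¹ * Real.exp (-(w i - m i) ^ 2 / (2 * s i))) =
      ∑ i, (-(1 / 2) * (Real.log (2 * π) + Real.log (s i)) - (w i - m i) ^ 2 / (2 * s i)) := by
  rw [Real.log_prod fun i _ => by have := hs i; positivity]
  refine Finset.sum_congr rfl fun i _ => ?_
  have := hs i
  rw [Real.log_mul (by positivity) (exp_ne_zero _), Real.log_inv, Real.log_sqrt (by positivity),
    Real.log_mul (by positivity) this.ne', Real.log_exp]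
  ring

lemma integral_log_prod_gaussianPDF_gaussPi (hs : ∀ i, 0 < s i) :
    ∫ w, Real.log (∏ i, (Real.sqrt (2 * π * s i))⁻¹ *
      Real.exp (-(w i - m i) ^ 2 / (2 * s i))) ∂gaussPi q m s =
      -(q / 2) * Real.log (2 * π) - 1 / 2 * ∑ i, Real.log (s i) - q / 2 := by
  simp only [log_prod_gaussianPDF hs]
  have hterm : ∀ i, Integrable (fun w => -(1 / 2) * (Real.log (2 * π) + Real.log (s i))
      - (w i - m i) ^ 2 / (2 * s i)) (gaussPi q m s) :=
    fun i => (integrable_const _).sub ((integrable_sq_sub_gaussPi i).div_const _)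
  rw [integral_finsetSum _ fun i _ => hterm i]
  simp only [integral_sub (integrable_const _) ((integrable_sq_sub_gaussPi _).div_const _),
    integral_div, integral_sq_sub_gaussPi fun i => (hs i).le, integral_const, probReal_univ,
    one_smul]
  have hhalf : ∀ i, s i / (2 * s i) = 1 / 2 := fun i => by field_simp [(hs i).ne']
  simp only [hhalf, Finset.sum_sub_distrib, Finset.sum_const, Finset.card_univ, Fintype.card_fin,
    nsmul_eq_mul, ← Finset.mul_sum, Finset.sum_add_distrib]
  ring

end GaussPi

theorem elbo_closed_form_palm_general
    (p q : ℕ) (x : Fin p → ℕ) (v : Fin p → Fin q → ℝ) (a : Fin q → ℝ)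
    (L : Matrix (Fin q) (Fin q) ℝ) (hLpd : L.PosDef)
    (c : ℝ) (m : Fin q → ℝ) (s : Fin q → ℝ) (hs : ∀ i, 0 < s i)
    (g hL : (Fin q → ℝ) → ℝ)
    (hg : g = fun w => ∏ i, (Real.sqrt (2 * π * s i))⁻¹ *
      Real.exp (-(w i - m i) ^ 2 / (2 * s i)))
    (hhL : hL = fun w => (2 * π) ^ (-(q : ℝ) / 2) * L.det ^ (-(1 : ℝ) / 2) *
      Real.exp (-(1 / 2) * (w ⬝ᵥ L⁻¹.mulVec w))) :
    (∫ w, ((∑ j, ((x j : ℝ) * (∑ i, v j i * (a i + w i))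
          - Real.exp (∑ i, v j i * (a i + w i))
          - Real.log (Nat.factorial (x j))))
        + Real.log (hL w) + c) ∂(gaussPi q m s))
      - (∫ w, Real.log (g w) ∂(gaussPi q m s)) =
    (∑ j, (x j : ℝ) * (∑ i, v j i * (a i + m i)))
      - (∑ j, Real.exp ((∑ i, v j i * (a i + m i)) + (1 / 2) * ∑ i, (v j i) ^ 2 * s i))
      - (∑ j, Real.log (Nat.factorial (x j)))
      - (1 / 2) * Real.log L.det - (1 / 2) * (m ⬝ᵥ L⁻¹.mulVec m)
      - (1 / 2) * ∑ i, L⁻¹ i i * s i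
      + (1 / 2) * ∑ i, Real.log (s i) + (q : ℝ) / 2 + c := by
  subst hg hhL
  have hdet : 0 < L.det := hLpd.det_pos
  have hdot : ∀ t w : Fin q → ℝ, ∑ i, t i * (a i + w i) = t ⬝ᵥ a + t ⬝ᵥ w :=
    fun t w => dotProduct_add t a w
  simp only [hdot]
  have hpoisson := fun j =>
    integrable_poisson_logLikelihood_gaussPi (m := m) (s := s) (x j) (v j ⬝ᵥ a) (v j)
  have hsum : Integrable (fun w => ∑ j, ((x j : ℝ) * (v j ⬝ᵥ a + v j ⬝ᵥ w)
      - exp (v j ⬝ᵥ a + v j ⬝ᵥ w) - Real.log (Nat.factorial (x j)))) (gaussPi q m s) :=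
    integrable_finsetSum _ fun j _ => hpoisson j
  rw [integral_add (hsum.fun_add (integrable_log_gaussianDensity_gaussPi hdet))
      (integrable_const c),
    integral_add hsum (integrable_log_gaussianDensity_gaussPi hdet),
    integral_finsetSum _ fun j _ => hpoisson j,
    integral_log_gaussianDensity_gaussPi (fun i => (hs i).le) hdet,
    integral_log_prod_gaussianPDF_gaussPi hs]
  simp only [integral_poisson_logLikelihood_gaussPi (fun i => (hs i).le), integral_const,
    probReal_univ, one_smul, Finset.sum_sub_distrib]
  ring

/-- Explicit closed-form ELBO (equation (3) of the paper): for the PALM complete-data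
log-density `Σ_j (x_j ⟨v_j, a+w⟩ − exp⟨v_j, a+w⟩ − log x_j!) + log h_Λ(w) + c` and the
Gaussian variational distribution `φ = N(m, diag s)` with Lebesgue density `g`, the ELBO
`E_{W∼φ}[log-joint] − E_{W∼φ}[log g(W)]` equals
`Σ_j x_j⟨v_j,a+m⟩ − Σ_j A_j − Σ_j log x_j! − (1/2) log det Λ − (1/2) mᵀΛ⁻¹m
  − (1/2) Σ_i (Λ⁻¹)_{ii} s_i + (1/2) Σ_i log s_i + q/2 + c`,
where `A_j = exp(⟨v_j,a+m⟩ + (1/2) Σ_i v_{ji}² s_i)`. -/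
theorem elbo_closed_form_palm
    (p q : ℕ) (x : Fin p → ℕ) (v : Fin p → Fin q → ℝ) (a : Fin q → ℝ)
    (L : Matrix (Fin q) (Fin q) ℝ) (hLsymm : L.IsSymm) (hLpd : L.PosDef)
    (c : ℝ) (m : Fin q → ℝ) (s : Fin q → ℝ) (hs : ∀ i, 0 < s i)
    (g hL : (Fin q → ℝ) → ℝ)
    (hg : g = fun w => ∏ i, (Real.sqrt (2 * π * s i))⁻¹ *
      Real.exp (-(w i - m i) ^ 2 / (2 * s i)))
    (hhL : hL = fun w => (2 * π) ^ (-(q : ℝ) / 2) * L.det ^ (-(1 : ℝ) / 2) *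
      Real.exp (-(1 / 2) * (w ⬝ᵥ L⁻¹.mulVec w))) :
    (∫ w, ((∑ j, ((x j : ℝ) * (∑ i, v j i * (a i + w i))
          - Real.exp (∑ i, v j i * (a i + w i))
          - Real.log (Nat.factorial (x j))))
        + Real.log (hL w) + c) ∂(gaussPi q m s))
      - (∫ w, Real.log (g w) ∂(gaussPi q m s)) =
    (∑ j, (x j : ℝ) * (∑ i, v j i * (a i + m i)))
      - (∑ j, Real.exp ((∑ i, v j i * (a i + m i)) + (1 / 2) * ∑ i, (v j i) ^ 2 * s i))
      - (∑ j, Real.log (Nat.factorial (x j)))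
      - (1 / 2) * Real.log L.det - (1 / 2) * (m ⬝ᵥ L⁻¹.mulVec m)
      - (1 / 2) * ∑ i, L⁻¹ i i * s i
      + (1 / 2) * ∑ i, Real.log (s i) + (q : ℝ) / 2 + c :=
  elbo_closed_form_palm_general p q x v a L hLpd c m s hs g hL hg hhL
end

section
/- Fix p, q ∈ ℕ, nonnegative reals x_1, …, x_p, constants c_1, …, c_p ∈ ℝ, vectors v_1, …, v_p ∈ ℝ^q, and a symmetric positive definite matrix Ω ∈ ℝ^{q×q}. Define F : ℝ^q × (0,∞)^q → ℝ by F(m, s) = Σ_{j=1}^p [ x_j ⟨v_j, m⟩ − exp( ⟨v_j, m⟩ + (1/2) Σ_{i=1}^q v_{ji}² s_i + c_j ) ] − (1/2) mᵀ Ω m − (1/2) Σ_{i=1}^q Ω_{ii} s_i + (1/2) Σ_{i=1}^q log s_i. Then F is strictly concave on the convex set ℝ^q × (0,∞)^q. -/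
/-!
The terms `-(1/2) mᵀΩm` and `(1/2) Σ log sᵢ` are strictly concave in `m` and in `s` separately,
hence jointly strictly concave in `(m, s)`: at two distinct points either the `m`- or the
`s`-coordinates differ, and that summand contributes a strict inequality. Every other term is
linear or minus the exponential of an affine function, hence concave, and adding a concave
function preserves strict concavity.
-/

open MeasureTheory Matrix Set

section

variable {𝕜 E F β ι : Type*} [Semiring 𝕜] [PartialOrder 𝕜] [AddCommMonoid E] [AddCommMonoid F]
  [AddCommMonoid β] [PartialOrder β]

theorem ConcaveOn.sum [SMul 𝕜 E] [IsOrderedAddMonoid β] [DistribMulAction 𝕜 β] {s : Set E}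
    {t : Finset ι} {f : ι → E → β} (hs : Convex 𝕜 s) (hf : ∀ i ∈ t, ConcaveOn 𝕜 s (f i)) :
    ConcaveOn 𝕜 s fun x => ∑ i ∈ t, f i x := by
  refine ⟨hs, fun x hx y hy a b ha hb hab => ?_⟩
  rw [Finset.smul_sum, Finset.smul_sum, ← Finset.sum_add_distrib]
  exact Finset.sum_le_sum fun i hi => (hf i hi).2 hx hy ha hb hab

variable [Module 𝕜 E] [Module 𝕜 F] [IsOrderedCancelAddMonoid β] [Module 𝕜 β]

theorem StrictConcaveOn.add_prod {s : Set E} {t : Set F} {f : E → β} {g : F → β}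
    (hf : StrictConcaveOn 𝕜 s f) (hg : StrictConcaveOn 𝕜 t g) :
    StrictConcaveOn 𝕜 (s ×ˢ t) fun x => f x.1 + g x.2 := by
  refine ⟨hf.1.prod hg.1, fun x hx y hy hxy a b ha hb hab => ?_⟩
  rw [smul_add, smul_add, add_add_add_comm]
  obtain hne₁ | hne₂ := not_and_or.mp fun h => hxy (Prod.ext h.1 h.2)
  · exact add_lt_add_of_lt_of_le (hf.2 hx.1 hy.1 hne₁ ha hb hab)
      (hg.concaveOn.2 hx.2 hy.2 ha.le hb.le hab)
  · exact add_lt_add_of_le_of_lt (hf.concaveOn.2 hx.1 hy.1 ha.le hb.le hab)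
      (hg.2 hx.2 hy.2 hne₂ ha hb hab)

theorem StrictConcaveOn.sum_pi [Fintype ι] {s : ι → Set E} {f : ι → E → β}
    (hf : ∀ i, StrictConcaveOn 𝕜 (s i) (f i)) :
    StrictConcaveOn 𝕜 (univ.pi s) fun x => ∑ i, f i (x i) := by
  refine ⟨convex_pi fun i _ => (hf i).1, fun x hx y hy hxy a b ha hb hab => ?_⟩
  obtain ⟨i₀, hi₀⟩ := Function.ne_iff.mp hxy
  simp only [Finset.smul_sum, ← Finset.sum_add_distrib, Pi.add_apply, Pi.smul_apply]
  exact Finset.sum_lt_sum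
    (fun i _ => (hf i).concaveOn.2 (hx i trivial) (hy i trivial) ha.le hb.le hab)
    ⟨i₀, Finset.mem_univ _, (hf i₀).2 (hx i₀ trivial) (hy i₀ trivial) hi₀ ha hb hab⟩

end

theorem StrictConcaveOn.smul {𝕜 E β : Type*} [CommSemiring 𝕜] [PartialOrder 𝕜]
    [AddCommMonoid E] [SMul 𝕜 E] [AddCommMonoid β] [PartialOrder β] [Module 𝕜 β]
    [PosSMulStrictMono 𝕜 β] {s : Set E} {f : E → β} {c : 𝕜} (hc : 0 < c)
    (hf : StrictConcaveOn 𝕜 s f) : StrictConcaveOn 𝕜 s fun x => c • f x :=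
  ⟨hf.1, fun x hx y hy hxy a b ha hb hab => by
    rw [smul_comm a, smul_comm b, ← smul_add]
    exact smul_lt_smul_of_pos_left (hf.2 hx hy hxy ha hb hab) hc⟩

theorem Matrix.PosDef.strictConvexOn_dotProduct_mulVec {𝕜 n : Type*} [Field 𝕜] [LinearOrder 𝕜]
    [IsStrictOrderedRing 𝕜] [StarRing 𝕜] [TrivialStar 𝕜] [Fintype n] {A : Matrix n n 𝕜}
    (hA : A.PosDef) : StrictConvexOn 𝕜 univ fun x => x ⬝ᵥ A *ᵥ x := by
  refine ⟨convex_univ, fun x _ y _ hxy a b ha hb hab => ?_⟩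
  have hgap : a * (x ⬝ᵥ A *ᵥ x) + b * (y ⬝ᵥ A *ᵥ y)
      - (a • x + b • y) ⬝ᵥ A *ᵥ (a • x + b • y) = a * b * ((x - y) ⬝ᵥ A *ᵥ (x - y)) := by
    obtain rfl : b = 1 - a := by linear_combination hab
    simp only [mulVec_add, mulVec_sub, mulVec_smul, dotProduct_add, add_dotProduct,
      dotProduct_sub, sub_dotProduct, dotProduct_smul, smul_dotProduct, smul_eq_mul]
    ring
  have hpos := hA.dotProduct_mulVec_pos (sub_ne_zero.mpr hxy)
  rw [star_trivial] at hpos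
  simp only [smul_eq_mul]
  linarith [mul_pos (mul_pos ha hb) hpos]

theorem LinearMap.concaveOn_sub_exp_comp_affineMap {E : Type*} [AddCommGroup E] [Module ℝ E]
    (L : E →ₗ[ℝ] ℝ) (g : E →ᵃ[ℝ] ℝ) : ConcaveOn ℝ univ fun z => L z - Real.exp (g z) :=
  (L.concaveOn convex_univ).sub (convexOn_exp.comp_affineMap g)

theorem elbo_strictConcaveOn_variational_params_general
    (p q : ℕ) (x : Fin p → ℝ) (c : Fin p → ℝ)
    (v : Fin p → Fin q → ℝ)
    (Om : Matrix (Fin q) (Fin q) ℝ) (hOpd : Om.PosDef) :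
    StrictConcaveOn ℝ {ms : (Fin q → ℝ) × (Fin q → ℝ) | ∀ i, 0 < ms.2 i}
      (fun ms =>
        (∑ j, (x j * (∑ i, v j i * ms.1 i)
          - Real.exp ((∑ i, v j i * ms.1 i) + (1 / 2) * (∑ i, (v j i) ^ 2 * ms.2 i) + c j)))
        - (1 / 2) * (ms.1 ⬝ᵥ Om.mulVec ms.1)
        - (1 / 2) * ∑ i, Om i i * ms.2 i
        + (1 / 2) * ∑ i, Real.log (ms.2 i)) := by
  have hexp : ∀ j, ConcaveOn ℝ univ fun ms : (Fin q → ℝ) × (Fin q → ℝ) =>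
      x j * (v j ⬝ᵥ ms.1) - Real.exp (v j ⬝ᵥ ms.1 + (1 / 2) * (v j ^ 2 ⬝ᵥ ms.2) + c j) :=
    fun j => LinearMap.concaveOn_sub_exp_comp_affineMap
      ((x j • dotProductBilin ℝ ℝ (v j)).comp (LinearMap.fst ℝ _ _))
      (((dotProductBilin ℝ ℝ (v j)).coprod
        ((1 / 2 : ℝ) • dotProductBilin ℝ ℝ (v j ^ 2))).toAffineMap + AffineMap.const ℝ _ (c j))
  have hdiag : ConcaveOn ℝ univ fun ms : (Fin q → ℝ) × (Fin q → ℝ) =>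
      -(1 / 2) * (Om.diag ⬝ᵥ ms.2) :=
    ((-(1 / 2 : ℝ) • dotProductBilin ℝ ℝ Om.diag).comp (LinearMap.snd ℝ _ _)).concaveOn convex_univ
  have hstrict : StrictConcaveOn ℝ (univ ×ˢ univ.pi fun _ => Ioi 0)
      fun ms : (Fin q → ℝ) × (Fin q → ℝ) =>
        (1 / 2 : ℝ) • (-(ms.1 ⬝ᵥ Om *ᵥ ms.1) + ∑ i, Real.log (ms.2 i)) :=
    (hOpd.strictConvexOn_dotProduct_mulVec.neg.add_prod
      (StrictConcaveOn.sum_pi fun _ => strictConcaveOn_log_Ioi)).smul one_half_pos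
  have hdomain : {ms : (Fin q → ℝ) × (Fin q → ℝ) | ∀ i, 0 < ms.2 i}
      = univ ×ˢ univ.pi fun _ => Ioi 0 := by
    ext; simp
  rw [hdomain]
  refine ((((ConcaveOn.sum (t := Finset.univ) convex_univ fun j _ => hexp j).add hdiag).subset
    (subset_univ _) hstrict.1).add_strictConcaveOn hstrict).congr fun ms _ => ?_
  simp only [Pi.add_apply, smul_eq_mul, dotProduct, Pi.pow_apply, diag_apply]
  ring

/-- Strict concavity of the per-subject ELBO in the Gaussian variational parameters
`(m, s) ∈ ℝ^q × (0,∞)^q`: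
`F(m,s) = Σ_j [x_j ⟨v_j, m⟩ − exp(⟨v_j, m⟩ + (1/2) Σ_i v_{ji}² s_i + c_j)]
  − (1/2) mᵀΩm − (1/2) Σ_i Ω_{ii} s_i + (1/2) Σ_i log s_i`
is strictly concave on the convex set `ℝ^q × (0,∞)^q`, where `Ω` is symmetric positive
definite and the `x_j` are nonnegative. -/
theorem elbo_strictConcaveOn_variational_params
    (p q : ℕ) (x : Fin p → ℝ) (hx : ∀ j, 0 ≤ x j) (c : Fin p → ℝ)
    (v : Fin p → Fin q → ℝ)
    (Om : Matrix (Fin q) (Fin q) ℝ) (hOsymm : Om.IsSymm) (hOpd : Om.PosDef) :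
    StrictConcaveOn ℝ {ms : (Fin q → ℝ) × (Fin q → ℝ) | ∀ i, 0 < ms.2 i}
      (fun ms =>
        (∑ j, (x j * (∑ i, v j i * ms.1 i)
          - Real.exp ((∑ i, v j i * ms.1 i) + (1 / 2) * (∑ i, (v j i) ^ 2 * ms.2 i) + c j)))
        - (1 / 2) * (ms.1 ⬝ᵥ Om.mulVec ms.1)
        - (1 / 2) * ∑ i, Om i i * ms.2 i
        + (1 / 2) * ∑ i, Real.log (ms.2 i)) :=
  elbo_strictConcaveOn_variational_params_general p q x c v Om hOpd
end

section
/- Fix n, p, q, d ∈ ℕ, nonnegative reals x_{ij} and constants c_{ij} ∈ ℝ for i ∈ {1,…,n}, j ∈ {1,…,p}, vectors v_1, …, v_p ∈ ℝ^q and u_1, …, u_n ∈ ℝ^d. Define G : ℝ^{q×d} → ℝ by G(B) = Σ_{i=1}^n Σ_{j=1}^p [ x_{ij} · v_jᵀ B u_i − exp( v_jᵀ B u_i + c_{ij} ) ]. Then G is concave on ℝ^{q×d}; moreover, if the vectors v_1, …, v_p span ℝ^q and the vectors u_1, …, u_n span ℝ^d, then G is strictly concave on ℝ^{q×d}. -/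
open Matrix

/-- The B-dependent part of the full ELBO of the paper's PALM model:
`G(B) = Σ_i Σ_j [x_{ij} · v_jᵀ B u_i − exp(v_jᵀ B u_i + c_{ij})]`. -/
noncomputable def elboB (n p q d : ℕ) (x : Fin n → Fin p → ℝ) (c : Fin n → Fin p → ℝ)
    (v : Fin p → Fin q → ℝ) (u : Fin n → Fin d → ℝ) (B : Matrix (Fin q) (Fin d) ℝ) : ℝ :=
  ∑ i, ∑ j, (x i j * (v j ⬝ᵥ B.mulVec (u i)) - Real.exp (v j ⬝ᵥ B.mulVec (u i) + c i j))

private lemma expkey {a b t1 t2 : ℝ} (ha : 0 ≤ a) (hb : 0 ≤ b) (hab : a + b = 1) (c : ℝ) :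
    Real.exp (a * t1 + b * t2 + c) ≤ a * Real.exp (t1 + c) + b * Real.exp (t2 + c) := by
  have h := convexOn_exp.2 (Set.mem_univ (t1 + c)) (Set.mem_univ (t2 + c)) ha hb hab
  have he : a • (t1 + c) + b • (t2 + c) = a * t1 + b * t2 + c := by
    have : a • (t1 + c) + b • (t2 + c) = a * t1 + b * t2 + (a + b) * c := by
      simp [smul_eq_mul]; ring
    rw [this, hab, one_mul]
  rw [he] at h
  simpa [smul_eq_mul] using h

private lemma expkey_strict {a b t1 t2 : ℝ} (ha : 0 < a) (hb : 0 < b) (hab : a + b = 1)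
    (hne : t1 ≠ t2) (c : ℝ) :
    Real.exp (a * t1 + b * t2 + c) < a * Real.exp (t1 + c) + b * Real.exp (t2 + c) := by
  have hne' : t1 + c ≠ t2 + c := by simpa using hne
  have h := strictConvexOn_exp.2 (Set.mem_univ (t1 + c)) (Set.mem_univ (t2 + c)) hne' ha hb hab
  have he : a • (t1 + c) + b • (t2 + c) = a * t1 + b * t2 + c := by
    have : a • (t1 + c) + b • (t2 + c) = a * t1 + b * t2 + (a + b) * c := by
      simp [smul_eq_mul]; ring
    rw [this, hab, one_mul]
  rw [he] at h
  simpa [smul_eq_mul] using h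

private lemma lcomb {q d : ℕ} (v : Fin q → ℝ) (u : Fin d → ℝ) (a b : ℝ)
    (B1 B2 : Matrix (Fin q) (Fin d) ℝ) :
    v ⬝ᵥ (a • B1 + b • B2).mulVec u = a * (v ⬝ᵥ B1.mulVec u) + b * (v ⬝ᵥ B2.mulVec u) := by
  simp [Matrix.add_mulVec, Matrix.smul_mulVec, dotProduct_add, dotProduct_smul,
    smul_eq_mul]

/-- `G` is concave in the coefficient matrix `B ∈ ℝ^{q×d}`; moreover, if the `v_j` span `ℝ^q`
and the `u_i` span `ℝ^d`, then `G` is strictly concave. -/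
theorem elbo_concaveOn_coefficient_matrix
    (n p q d : ℕ) (x : Fin n → Fin p → ℝ) (hx : ∀ i j, 0 ≤ x i j)
    (c : Fin n → Fin p → ℝ) (v : Fin p → Fin q → ℝ) (u : Fin n → Fin d → ℝ) :
    ConcaveOn ℝ Set.univ (elboB n p q d x c v u) ∧
      (Submodule.span ℝ (Set.range v) = ⊤ → Submodule.span ℝ (Set.range u) = ⊤ →
        StrictConcaveOn ℝ Set.univ (elboB n p q d x c v u)) := by
  constructor
  · refine ⟨convex_univ, fun B1 _ B2 _ a b ha hb hab => ?_⟩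
    simp only [elboB, smul_eq_mul, Finset.mul_sum, ← Finset.sum_add_distrib]
    refine Finset.sum_le_sum fun i _ => Finset.sum_le_sum fun j _ => ?_
    rw [lcomb]
    have := expkey (t1 := v j ⬝ᵥ B1.mulVec (u i)) (t2 := v j ⬝ᵥ B2.mulVec (u i)) ha hb hab
      (c i j)
    nlinarith [this]
  · intro hv hu
    refine ⟨convex_univ, fun B1 _ B2 _ hne a b ha hb hab => ?_⟩
    -- there exist i j with differing linear values
    have hexists : ∃ ij : Fin n × Fin p,
        v ij.2 ⬝ᵥ B1.mulVec (u ij.1) ≠ v ij.2 ⬝ᵥ B2.mulVec (u ij.1) := by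
      by_contra hcon
      push_neg at hcon
      apply hne
      have hD : ∀ (i : Fin n) (j : Fin p), v j ⬝ᵥ (B1 - B2).mulVec (u i) = 0 := by
        intro i j
        have := hcon (i, j)
        simp only [Matrix.sub_mulVec, dotProduct_sub] at *
        linarith [this]
      -- extend over spans
      have hD2 : ∀ (j : Fin p) (z : Fin d → ℝ), v j ⬝ᵥ (B1 - B2).mulVec z = 0 := by
        intro j z
        let ψ : (Fin d → ℝ) →ₗ[ℝ] ℝ :=
          { toFun := fun z => v j ⬝ᵥ (B1 - B2).mulVec z
            map_add' := fun z1 z2 => by simp [Matrix.mulVec_add, dotProduct_add]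
            map_smul' := fun r z => by simp [Matrix.mulVec_smul, dotProduct_smul] }
        have hker : Submodule.span ℝ (Set.range u) ≤ LinearMap.ker ψ := by
          rw [Submodule.span_le]
          rintro _ ⟨i, rfl⟩
          exact hD i j
        have : z ∈ LinearMap.ker ψ := hker (hu ▸ Submodule.mem_top)
        exact this
      have hD3 : ∀ (w : Fin q → ℝ) (z : Fin d → ℝ), w ⬝ᵥ (B1 - B2).mulVec z = 0 := by
        intro w z
        let φ : (Fin q → ℝ) →ₗ[ℝ] ℝ :=
          { toFun := fun w => w ⬝ᵥ (B1 - B2).mulVec z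
            map_add' := fun w1 w2 => by simp [add_dotProduct]
            map_smul' := fun r w => by simp [smul_dotProduct] }
        have hker : Submodule.span ℝ (Set.range v) ≤ LinearMap.ker φ := by
          rw [Submodule.span_le]
          rintro _ ⟨j, rfl⟩
          exact hD2 j z
        exact hker (hv ▸ Submodule.mem_top)
      have : B1 - B2 = 0 := by
        ext k l
        have := hD3 (Pi.single k 1) (Pi.single l 1)
        simpa [Matrix.mulVec, dotProduct, Pi.single_apply, Finset.sum_ite_eq',
          Finset.sum_ite_eq] using this
      have := sub_eq_zero.mp this
      exact this
    obtain ⟨⟨i0, j0⟩, hij⟩ := hexists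
    have hform : ∀ B : Matrix (Fin q) (Fin d) ℝ, elboB n p q d x c v u B =
        ∑ ij : Fin n × Fin p, (x ij.1 ij.2 * (v ij.2 ⬝ᵥ B.mulVec (u ij.1)) -
          Real.exp (v ij.2 ⬝ᵥ B.mulVec (u ij.1) + c ij.1 ij.2)) := by
      intro B
      rw [Fintype.sum_prod_type]
      rfl
    simp only [hform, smul_eq_mul, Finset.mul_sum, ← Finset.sum_add_distrib]
    refine Finset.sum_lt_sum (fun ij _ => ?_) ⟨(i0, j0), Finset.mem_univ _, ?_⟩
    · rw [lcomb]
      have := expkey (t1 := v ij.2 ⬝ᵥ B1.mulVec (u ij.1)) (t2 := v ij.2 ⬝ᵥ B2.mulVec (u ij.1))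
        ha.le hb.le hab (c ij.1 ij.2)
      nlinarith [this]
    · rw [lcomb]
      have := expkey_strict (t1 := v j0 ⬝ᵥ B1.mulVec (u i0)) (t2 := v j0 ⬝ᵥ B2.mulVec (u i0))
        ha hb hab hij (c i0 j0)
      nlinarith [this]
end
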